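/- arXiv:2503.23564 — 5 statements merged into one kernel-verified Lean document; each statement's English description precedes it below -/
import Mathlib

section
/- For any monic polynomial p(x) of positive degree k with integer coefficients and complex roots r_1, ..., r_k whose sum equals ℓ, the average squared distance of the roots from their mean, (1/k) ∑_{i=1}^k |r_i - ℓ/k|², is at least (ℓ/k - ⌊ℓ/k⌋)(⌈ℓ/k⌉ - ℓ/k). -/
/-!
Put `μ = ℓ / k` and `a = ⌊μ⌋`. Since the roots have mean `μ`, the parallel axis theorem
turns the claim into `∑ (|rᵢ - a|² + |rᵢ - (a + 1)|²) ≥ k`. A root equal to `a` or `a + 1`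
contributes exactly `1` to this sum and can be split off, leaving a monic integer polynomial
of smaller degree. If there is no such root, `p(a) p(a + 1) = ∏ (a - rᵢ)(a + 1 - rᵢ)` is a
nonzero integer, so AM-GM gives `∑ |rᵢ - a| |rᵢ - (a + 1)| ≥ k`, which is even stronger.
-/

open Polynomial Finset

theorem Multiset.card_le_sum_of_one_le_prod {s : Multiset ℝ} (hs : ∀ x ∈ s, 0 ≤ x)
    (hprod : 1 ≤ s.prod) : (Multiset.card s : ℝ) ≤ s.sum := by
  classical
  rcases Nat.eq_zero_or_pos (Multiset.card s) with hcard | hcard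
  · simp [Multiset.card_eq_zero.mp hcard]
  have hn : (0 : ℝ) < Multiset.card s := by exact_mod_cast hcard
  have amgm := Real.geom_mean_le_arith_mean s.toEnumFinset (fun _ => 1) Prod.fst
    (fun _ _ => zero_le_one) (by simpa using hn)
    (fun x hx => hs _ (Multiset.mem_of_mem_toEnumFinset hx))
  simp only [Real.rpow_one, one_mul, sum_const, Multiset.card_toEnumFinset, nsmul_eq_mul,
    mul_one, ← Multiset.prod_eq_prod_toEnumFinset, ← Multiset.sum_eq_sum_toEnumFinset] at amgm
  rw [le_div_iff₀ hn] at amgm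
  nlinarith [Real.one_le_rpow hprod (inv_nonneg.mpr hn.le)]

theorem Finset.sum_norm_sub_sq_eq_add {ι E : Type*} [NormedAddCommGroup E]
    [InnerProductSpace ℝ E] (s : Finset ι) (x : ι → E) {m : E}
    (hm : ∑ i ∈ s, (x i - m) = 0) (c : E) :
    ∑ i ∈ s, ‖x i - c‖ ^ 2 = ∑ i ∈ s, ‖x i - m‖ ^ 2 + #s * ‖m - c‖ ^ 2 := by
  have h i : ‖x i - c‖ ^ 2 =
      ‖x i - m‖ ^ 2 + 2 * inner ℝ (x i - m) (m - c) + ‖m - c‖ ^ 2 := by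
    rw [← norm_add_sq_real, sub_add_sub_cancel]
  simp only [h, sum_add_distrib, ← mul_sum, ← sum_inner, hm, inner_zero_left, mul_zero,
    add_zero, sum_const, nsmul_eq_mul]

theorem Finset.card_mul_le_sum_norm_sub_sq {ι : Type*} (s : Finset ι) (x : ι → ℂ) {μ : ℝ}
    (hμ : ∑ i ∈ s, (x i - μ) = 0) (a : ℝ)
    (h : (#s : ℝ) ≤ ∑ i ∈ s, (‖x i - a‖ ^ 2 + ‖x i - (a + 1)‖ ^ 2)) :
    #s * ((μ - a) * (a + 1 - μ)) ≤ ∑ i ∈ s, ‖x i - μ‖ ^ 2 := by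
  have hdist (b : ℝ) : ‖(μ : ℂ) - b‖ ^ 2 = (μ - b) ^ 2 := by
    rw [← Complex.ofReal_sub, Complex.norm_real, Real.norm_eq_abs, sq_abs]
  rw [← Complex.ofReal_one, ← Complex.ofReal_add, sum_add_distrib,
    s.sum_norm_sub_sq_eq_add x hμ (a : ℂ), s.sum_norm_sub_sq_eq_add x hμ ((a + 1 : ℝ) : ℂ),
    hdist, hdist] at h
  linear_combination h / 2

theorem Multiset.exists_monic_aroots_eq_of_coeff_prod_X_sub_C {s : Multiset ℂ}
    (h : ∀ i : ℕ, ∃ z : ℤ, (s.map (X - C ·)).prod.coeff i = (z : ℂ)) :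
    ∃ p : ℤ[X], p.Monic ∧ p.aroots ℂ = s := by
  obtain ⟨p, hp⟩ := (mem_lifts (f := Int.castRingHom ℂ) _).mp <|
    (lifts_iff_coeff_lifts _).mpr fun i => by
      obtain ⟨z, hz⟩ := h i
      exact ⟨z, by simpa using hz.symm⟩
  have hmonic : (p.map (Int.castRingHom ℂ)).Monic :=
    hp ▸ monic_multiset_prod_of_monic _ _ fun a _ => monic_X_sub_C a
  refine ⟨p, monic_of_injective Int.cast_injective hmonic, ?_⟩
  rw [aroots_def, algebraMap_int_eq, hp, roots_multiset_prod_X_sub_C]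

namespace Polynomial.Monic

theorem one_le_prod_norm_sub_aroots {p : ℤ[X]} (hp : p.Monic) {a : ℤ} (ha : p.eval a ≠ 0) :
    1 ≤ ((p.aroots ℂ).map fun z => ‖z - (a : ℂ)‖).prod := by
  have heval : ((p.eval a : ℤ) : ℂ) = ((p.aroots ℂ).map fun z => (a : ℂ) - z).prod := by
    rw [← (IsAlgClosed.splits _).aeval_eq_prod_aroots_of_monic hp]
    simpa using (aeval_algebraMap_apply_eq_algebraMap_eval (A := ℂ) a p).symm
  calc (1 : ℝ) ≤ |((p.eval a : ℤ) : ℝ)| := by exact_mod_cast Int.one_le_abs ha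
    _ = ‖((p.aroots ℂ).map fun z => (a : ℂ) - z).prod‖ := by
      rw [← heval, Complex.norm_intCast]
    _ = _ := by
      refine (map_multiset_prod (normHom : ℂ →*₀ ℝ) _).trans ?_
      rw [Multiset.map_map]
      exact congrArg _ (Multiset.map_congr rfl fun z _ => norm_sub_rev (a : ℂ) z)

theorem natDegree_le_sum_aroots_norm_mul_norm {p : ℤ[X]} (hp : p.Monic) {a b : ℤ}
    (ha : p.eval a ≠ 0) (hb : p.eval b ≠ 0) :
    (p.natDegree : ℝ) ≤ ((p.aroots ℂ).map fun z => ‖z - (a : ℂ)‖ * ‖z - (b : ℂ)‖).sum := by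
  rw [← IsAlgClosed.card_aroots_eq_natDegree (B := ℂ),
    ← Multiset.card_map (fun z => ‖z - (a : ℂ)‖ * ‖z - (b : ℂ)‖)]
  refine Multiset.card_le_sum_of_one_le_prod ?_ ?_
  · simp only [Multiset.mem_map]
    rintro _ ⟨z, -, rfl⟩
    positivity
  · rw [Multiset.prod_map_mul]
    exact one_le_mul_of_one_le_of_one_le (hp.one_le_prod_norm_sub_aroots ha)
      (hp.one_le_prod_norm_sub_aroots hb)

theorem natDegree_le_sum_aroots_norm_sub_sq {p : ℤ[X]} (hp : p.Monic) (a : ℤ) :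
    (p.natDegree : ℝ) ≤
      ((p.aroots ℂ).map fun z => ‖z - (a : ℂ)‖ ^ 2 + ‖z - ((a : ℂ) + 1)‖ ^ 2).sum := by
  induction hn : p.natDegree generalizing p with
  | zero =>
    push_cast
    exact Multiset.sum_nonneg fun x hx => by
      obtain ⟨z, -, rfl⟩ := Multiset.mem_map.mp hx
      positivity
  | succ n ih =>
    by_cases hroot : ∃ c, (c = a ∨ c = a + 1) ∧ p.eval c = 0
    · obtain ⟨c, hc, hpc⟩ := hroot
      set q := p /ₘ (X - C c)
      have hpq : p = (X - C c) * q := (mul_divByMonic_eq_iff_isRoot.mpr hpc).symm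
      have hq : q.Monic := (monic_X_sub_C c).of_mul_monic_left (hpq ▸ hp)
      have hqn : q.natDegree = n := by
        rw [hpq, (monic_X_sub_C c).natDegree_mul hq, natDegree_X_sub_C] at hn
        omega
      have hc_term : ‖(c : ℂ) - (a : ℂ)‖ ^ 2 + ‖(c : ℂ) - ((a : ℂ) + 1)‖ ^ 2 = 1 := by
        rcases hc with rfl | rfl <;> simp
      rw [hpq, aroots_mul (hpq ▸ hp.ne_zero), aroots_X_sub_C, Multiset.singleton_add,
        Multiset.map_cons, Multiset.sum_cons, algebraMap_int_eq, eq_intCast, hc_term,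
        Nat.cast_succ, add_comm]
      exact add_le_add_right (ih hq hqn) 1
    · push Not at hroot
      have key := hp.natDegree_le_sum_aroots_norm_mul_norm (hroot a (.inl rfl))
        (hroot (a + 1) (.inr rfl))
      rw [hn, Int.cast_add, Int.cast_one] at key
      refine key.trans (Multiset.sum_map_le_sum_map _ _ fun z _ => ?_)
      nlinarith [two_mul_le_add_sq ‖z - (a : ℂ)‖ ‖z - ((a : ℂ) + 1)‖,
        mul_nonneg (norm_nonneg (z - (a : ℂ))) (norm_nonneg (z - ((a : ℂ) + 1)))]

end Polynomial.Monic

/-- For any monic polynomial of positive degree `k` with integer coefficients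
and complex roots `r 1, ..., r k` summing to `ℓ`, the average squared distance
of the roots from their mean is at least `(ℓ/k - ⌊ℓ/k⌋)(⌈ℓ/k⌉ - ℓ/k)`. -/
theorem stmt0 (k : ℕ) (hk : 1 ≤ k) (r : Fin k → ℂ)
    (hint : ∀ i : ℕ, ∃ z : ℤ, (∏ j, (X - C (r j))).coeff i = (z : ℂ))
    (ℓ : ℤ) (hsum : ∑ i, r i = (ℓ : ℂ)) :
    ((ℓ : ℝ) / k - ⌊(ℓ : ℝ) / k⌋) * (⌈(ℓ : ℝ) / k⌉ - (ℓ : ℝ) / k) ≤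
      (1 / (k : ℝ)) * ∑ i, ‖r i - (((ℓ : ℝ) / k : ℝ) : ℂ)‖ ^ 2 := by
  set μ : ℝ := (ℓ : ℝ) / k
  have hk0 : (0 : ℝ) < k := by exact_mod_cast hk
  have hprod : ((univ.val.map r).map (X - C ·)).prod = ∏ j, (X - C (r j)) := by
    rw [Multiset.map_map]; rfl
  obtain ⟨p, hp, hroots⟩ :=
    (univ.val.map r).exists_monic_aroots_eq_of_coeff_prod_X_sub_C (hprod ▸ hint)
  have hdeg : p.natDegree = k := by
    rw [← IsAlgClosed.card_aroots_eq_natDegree (B := ℂ), hroots, Multiset.card_map, card_val,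
      card_univ, Fintype.card_fin]
  have hmean : ∑ i, (r i - μ) = 0 := by
    rw [sum_sub_distrib, hsum, sum_const, card_univ, Fintype.card_fin, nsmul_eq_mul, sub_eq_zero,
      ← Complex.ofReal_natCast, ← Complex.ofReal_mul, mul_div_cancel₀ _ hk0.ne',
      Complex.ofReal_intCast]
  have hbound := hp.natDegree_le_sum_aroots_norm_sub_sq ⌊μ⌋
  rw [hdeg, hroots, Multiset.map_map, ← sum_eq_multiset_sum] at hbound
  have key := univ.card_mul_le_sum_norm_sub_sq r hmean ⌊μ⌋ (by simpa using hbound)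
  rw [card_univ, Fintype.card_fin] at key
  rw [one_div_mul_eq_div, le_div_iff₀ hk0]
  have hceil : (⌈μ⌉ : ℝ) ≤ ⌊μ⌋ + 1 := by exact_mod_cast Int.ceil_le_floor_add_one μ
  calc (μ - ⌊μ⌋) * (⌈μ⌉ - μ) * k ≤ (μ - ⌊μ⌋) * (⌊μ⌋ + 1 - μ) * k := by
        gcongr
        exact sub_nonneg.mpr (Int.floor_le μ)
    _ = k * ((μ - ⌊μ⌋) * (⌊μ⌋ + 1 - μ)) := mul_comm _ _
    _ ≤ _ := key
end

section
/- For any simple directed graph with n vertices and m arcs, the normalized Laplacian eigenvalue spread satisfies σ² ≥ (1/(n-1)²)[m - (n-1)κ][(n-1)(κ+1) - m], where κ = ⌊m/(n-1)⌋. -/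
/-!
Since `L` has integer entries and `λ₁ = 0`, the numbers `λ₂, …, λₙ` are the roots of a monic
integer polynomial `q`. For every integer `c` this forces `∑ (|λᵢ - c - 1/2|² - 1/4) ≥ 0`: roots
equal to `c` or `c + 1` contribute `0` and can be divided off, and otherwise `q(c) q(c+1)` is a
nonzero integer, so `1 ≤ ∏ |(λᵢ - c - 1/2)² - 1/4| ≤ exp ∑ (|λᵢ - c - 1/2|² - 3/4)`.
Expanding around the mean `m/(n-1)` (the `λᵢ` sum to `tr L = m`) gives the bound, with `c = κ`.
-/

open Polynomial

/-- In-degree Laplacian `L = D - A` of a simple directed graph: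
`A j i = true` means `(j, i)` is an arc. -/
noncomputable def lap (n : ℕ) (A : Fin n → Fin n → Bool) : Matrix (Fin n) (Fin n) ℂ :=
  Matrix.diagonal (fun i => ∑ j, if A j i then (1 : ℂ) else 0) -
    Matrix.of (fun i j => if A j i then (1 : ℂ) else 0)

/-- Number of arcs of the directed graph. -/
def arcs (n : ℕ) (A : Fin n → Fin n → Bool) : ℕ :=
  (Finset.univ.filter (fun p : Fin n × Fin n => A p.1 p.2)).card

open Finset

theorem Complex.norm_sq_sub_quarter_le_exp (z : ℂ) :
    ‖z ^ 2 - 1 / 4‖ ≤ Real.exp (Complex.normSq z - 3 / 4) :=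
  calc ‖z ^ 2 - 1 / 4‖ ≤ ‖z ^ 2‖ + ‖(1 / 4 : ℂ)‖ := norm_sub_le _ _
    _ = Complex.normSq z - 3 / 4 + 1 := by
        rw [norm_pow, Complex.sq_norm, norm_div, norm_one, Complex.norm_ofNat]; ring
    _ ≤ _ := Real.add_one_le_exp _

section

variable {ι : Type*}

theorem exists_map_eq_prod_erase_of_eq_intCast [DecidableEq ι] {s : Finset ι} {z : ι → ℂ}
    {f : ℤ[X]} (hf : f.map (Int.castRingHom ℂ) = ∏ i ∈ s, (X - C (z i))) {i : ι} (hi : i ∈ s) {a : ℤ}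
    (ha : z i = a) :
    ∃ g : ℤ[X], g.map (Int.castRingHom ℂ) = ∏ j ∈ s.erase i, (X - C (z j)) := by
  have hroot : f.IsRoot a := by
    have h := eval_intCast_map (Int.castRingHom ℂ) f a
    rw [hf, eval_prod, prod_eq_zero hi (by simp [ha])] at h
    simpa using h.symm
  refine ⟨f /ₘ (X - C a : ℤ[X]), mul_left_cancel₀ (X_sub_C_ne_zero (a : ℂ)) ?_⟩
  calc (X - C (a : ℂ)) * (f /ₘ (X - C a)).map (Int.castRingHom ℂ)
      = ((X - C a) * (f /ₘ (X - C a))).map (Int.castRingHom ℂ) := by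
        simp [Polynomial.map_mul]
    _ = f.map (Int.castRingHom ℂ) := by rw [mul_divByMonic_eq_iff_isRoot.mpr hroot]
    _ = (X - C (a : ℂ)) * ∏ j ∈ s.erase i, (X - C (z j)) := by
        rw [hf, ← mul_prod_erase s _ hi, ha]

theorem sum_normSq_sub_intCast_sub_half_nonneg [DecidableEq ι] (c : ℤ) (s : Finset ι)
    (z : ι → ℂ) (f : ℤ[X])
    (hf : f.map (Int.castRingHom ℂ) = ∏ i ∈ s, (X - C (z i))) :
    0 ≤ ∑ i ∈ s, (Complex.normSq (z i - c - 1 / 2) - 1 / 4) := by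
  induction s using Finset.strongInduction generalizing f with
  | H s ih =>
  by_cases hint : ∃ i ∈ s, z i = c ∨ z i = (c + 1 : ℤ)
  · obtain ⟨i, hi, hc⟩ := hint
    obtain ⟨g, hg⟩ := hc.elim (exists_map_eq_prod_erase_of_eq_intCast hf hi)
      (exists_map_eq_prod_erase_of_eq_intCast hf hi)
    have hzero : Complex.normSq (z i - c - 1 / 2) - 1 / 4 = 0 := by
      rcases hc with h | h <;> rw [h] <;> norm_num [Complex.normSq_apply]
    rw [← add_sum_erase s _ hi, hzero, zero_add]
    exact ih _ (erase_ssubset hi) g hg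
  · push Not at hint
    have heval (a : ℤ) : ((f.eval a : ℤ) : ℂ) = ∏ i ∈ s, ((a : ℂ) - z i) := by
      simpa [hf, eval_prod] using (eval_intCast_map (Int.castRingHom ℂ) f a).symm
    have hne (a : ℤ) (ha : ∀ i ∈ s, z i ≠ a) : f.eval a ≠ 0 := by
      rw [← Int.cast_ne_zero (α := ℂ), heval]
      exact prod_ne_zero_iff.mpr fun i hi => sub_ne_zero.mpr (ha i hi).symm
    have hprod : ((f.eval c * f.eval (c + 1) : ℤ) : ℂ) =
        ∏ i ∈ s, ((z i - c - 1 / 2) ^ 2 - 1 / 4) := by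
      rw [Int.cast_mul, heval, heval, ← prod_mul_distrib]
      exact prod_congr rfl fun i _ => by push_cast; ring
    have hone : 1 ≤ Real.exp (∑ i ∈ s, (Complex.normSq (z i - c - 1 / 2) - 3 / 4)) :=
      calc (1 : ℝ) ≤ ‖((f.eval c * f.eval (c + 1) : ℤ) : ℂ)‖ := by
            rw [Complex.norm_intCast]
            exact_mod_cast Int.one_le_abs (mul_ne_zero (hne c fun i hi => (hint i hi).1)
              (hne (c + 1) fun i hi => (hint i hi).2))
        _ = ∏ i ∈ s, ‖(z i - c - 1 / 2) ^ 2 - 1 / 4‖ := by rw [hprod, norm_prod]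
        _ ≤ ∏ i ∈ s, Real.exp (Complex.normSq (z i - c - 1 / 2) - 3 / 4) :=
            prod_le_prod (fun _ _ => norm_nonneg _) fun i _ => Complex.norm_sq_sub_quarter_le_exp _
        _ = _ := (Real.exp_sum _ _).symm
    exact (Real.one_le_exp_iff.mp hone).trans (sum_le_sum fun i _ => by linarith)

theorem sum_normSq_sub_ofReal_eq (s : Finset ι) (z : ι → ℂ) (μ a : ℝ)
    (hμ : ∑ i ∈ s, (z i).re = s.card * μ) :
    ∑ i ∈ s, Complex.normSq (z i - a) =
      ∑ i ∈ s, Complex.normSq (z i - μ) + s.card * (μ - a) ^ 2 := by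
  have hterm (w : ℂ) : Complex.normSq (w - a) =
      Complex.normSq (w - μ) + 2 * (μ - a) * (w.re - μ) + (μ - a) ^ 2 := by
    simp only [Complex.normSq_apply, Complex.sub_re, Complex.sub_im, Complex.ofReal_re,
      Complex.ofReal_im]
    ring
  simp only [hterm, sum_add_distrib, ← mul_sum, sum_sub_distrib, hμ, sum_const, nsmul_eq_mul]
  ring

theorem mean_sub_mul_sub_mean_le_variance (s : Finset ι) (z : ι → ℂ) (c m N : ℝ)
    (hN : (s.card : ℝ) = N) (hsum : ∑ i ∈ s, z i = m)
    (hc : 0 ≤ ∑ i ∈ s, (Complex.normSq (z i - c - 1 / 2) - 1 / 4)) :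
    (m - N * c) * (N * (c + 1) - m) / N ^ 2 ≤ (∑ i ∈ s, ‖z i - ((m / N : ℝ) : ℂ)‖ ^ 2) / N := by
  obtain rfl | hNpos := (hN ▸ Nat.cast_nonneg s.card : (0 : ℝ) ≤ N).eq_or_lt
  · simp
  have hre : ∑ i ∈ s, (z i).re = s.card * (m / N) := by
    rw [← Complex.re_sum, hsum, hN, Complex.ofReal_re]; field_simp
  have hsplit := sum_normSq_sub_ofReal_eq s z (m / N) (c + 1 / 2) hre
  rw [show ((c + 1 / 2 : ℝ) : ℂ) = c + 1 / 2 by push_cast; ring] at hsplit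
  simp only [sum_sub_distrib, sum_const, nsmul_eq_mul, hN, sub_sub] at hc
  simp only [Complex.sq_norm, hN] at hsplit ⊢
  have hvar : N * ((m / N - c) * (c + 1 - m / N)) ≤
      ∑ i ∈ s, Complex.normSq (z i - (m / N : ℝ)) := by
    linarith
  calc (m - N * c) * (N * (c + 1) - m) / N ^ 2 = N * ((m / N - c) * (c + 1 - m / N)) / N := by
        field_simp
    _ ≤ _ := div_le_div_of_nonneg_right hvar hNpos.le

end

theorem Matrix.sum_eq_trace_of_charpoly_eq_prod {ι : Type*} [Fintype ι] [DecidableEq ι]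
    {M : Matrix ι ι ℂ} {lam : ι → ℂ} (h : M.charpoly = ∏ i, (X - C (lam i))) :
    ∑ i, lam i = M.trace := by
  have hroots : (∏ i, (X - C (lam i))).roots = univ.val.map lam := by
    rw [prod_eq_multiset_prod, ← roots_multiset_prod_X_sub_C (univ.val.map lam),
      Multiset.map_map]
    rfl
  rw [M.trace_eq_sum_roots_charpoly, h, hroots, sum_eq_multiset_sum]

theorem trace_lap {n : ℕ} {A : Fin n → Fin n → Bool} (hsimple : ∀ i, A i i = false) :
    (lap n A).trace = arcs n A := by
  rw [arcs, ← sum_boole, Matrix.trace, Fintype.sum_prod_type, sum_comm]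
  simp [lap, hsimple]

theorem exists_map_eq_charpoly_lap (n : ℕ) (A : Fin n → Fin n → Bool) :
    ∃ f : ℤ[X], f.map (Int.castRingHom ℂ) = (lap n A).charpoly := by
  refine ⟨(Matrix.diagonal (fun i => ∑ j, if A j i then (1 : ℤ) else 0) -
    Matrix.of (fun i j => if A j i then (1 : ℤ) else 0)).charpoly, ?_⟩
  rw [← Matrix.charpoly_map]
  congr 1
  ext i j
  simp [lap, Matrix.diagonal, apply_ite (Int.cast : ℤ → ℂ)]

/-- For any simple directed graph with `n` vertices and `m` arcs, with Laplacian
eigenvalues `λ₁ = 0, λ₂, ..., λₙ`, the normalized spread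
`σ² = (1/(n-1)) ∑_{i≥2} |λᵢ - m/(n-1)|²` is at least
`(1/(n-1)²)[m - (n-1)κ][(n-1)(κ+1) - m]` where `κ = ⌊m/(n-1)⌋`. -/
theorem stmt6 (n : ℕ) (hn : 2 ≤ n) (A : Fin n → Fin n → Bool)
    (hsimple : ∀ i, A i i = false) (m : ℕ) (hm : arcs n A = m)
    (lam : Fin n → ℂ) (hfac : (lap n A).charpoly = ∏ i, (X - C (lam i)))
    (h0 : lam ⟨0, by omega⟩ = 0) :
    ((m : ℝ) - ((n : ℝ) - 1) * ((m / (n - 1) : ℕ) : ℝ)) *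
        (((n : ℝ) - 1) * (((m / (n - 1) : ℕ) : ℝ) + 1) - (m : ℝ)) / ((n : ℝ) - 1) ^ 2 ≤
      (∑ i ∈ Finset.univ.erase (⟨0, by omega⟩ : Fin n),
        ‖lam i - (((m : ℝ) / ((n : ℝ) - 1) : ℝ) : ℂ)‖ ^ 2) / ((n : ℝ) - 1) := by
  obtain ⟨f, hf⟩ := exists_map_eq_charpoly_lap n A
  obtain ⟨g, hg⟩ := exists_map_eq_prod_erase_of_eq_intCast (hf.trans hfac) (mem_univ _)
    (h0.trans Int.cast_zero.symm)
  have hsum : ∑ i ∈ univ.erase ⟨0, by omega⟩, lam i = m := by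
    rw [sum_erase _ h0, Matrix.sum_eq_trace_of_charpoly_eq_prod hfac, trace_lap hsimple, hm]
  have hcard : ((univ.erase (⟨0, by omega⟩ : Fin n)).card : ℝ) = n - 1 := by
    rw [card_erase_of_mem (mem_univ _), card_univ, Fintype.card_fin, Nat.cast_sub (by omega),
      Nat.cast_one]
  have hkey := sum_normSq_sub_intCast_sub_half_nonneg (m / (n - 1) : ℕ) _ lam g hg
  push_cast at hkey
  exact mean_sub_mul_sub_mean_le_variance _ lam _ _ _ hcard (by exact_mod_cast hsum)
    (by exact_mod_cast hkey)
end

section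
/- Let L be an n×n matrix with all row sums equal to 0, let J be the all-ones matrix, and let Q = L + J. Then λ · det(λI - Q) = (λ - n) · det(λI - L) for all λ. -/
/-- Let `L` be an `n × n` matrix with all row sums zero, `J` the all-ones
matrix, and `Q = L + J`. Then `λ · det(λI - Q) = (λ - n) · det(λI - L)`. -/
theorem stmt11 (n : ℕ) (L : Matrix (Fin n) (Fin n) ℂ)
    (hrow : ∀ i, ∑ j, L i j = 0) :
    ∀ x : ℂ,
      x * (x • (1 : Matrix (Fin n) (Fin n) ℂ) -
          (L + Matrix.of (fun _ _ => (1 : ℂ)))).det =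
        (x - (n : ℂ)) * (x • (1 : Matrix (Fin n) (Fin n) ℂ) - L).det := by
  intro x
  cases n with
  | zero => simp [Matrix.det_isEmpty]
  | succ m =>
    -- key: if all row sums of P equal r, then det P = r * det (P with column 0 := 1)
    have key : ∀ (P : Matrix (Fin (m+1)) (Fin (m+1)) ℂ) (r : ℂ), (∀ i, ∑ j, P i j = r) →
        P.det = r * (P.updateCol 0 (fun _ => 1)).det := by
      intro P r hP
      have h := Matrix.det_updateCol_sum P 0 (fun _ => (1:ℂ))
      simp only [one_smul, smul_eq_mul, one_mul] at h
      have h2 : (fun k => ∑ i, P k i) = fun _ => r := funext hP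
      rw [h2] at h
      rw [← h]
      have h3 : (fun _ : Fin (m+1) => r) = r • (fun _ => (1:ℂ)) := by
        funext _; simp
      rw [h3, Matrix.det_updateCol_smul]
    set M : Matrix (Fin (m+1)) (Fin (m+1)) ℂ := x • 1 - L with hMdef
    set J : Matrix (Fin (m+1)) (Fin (m+1)) ℂ := Matrix.of (fun _ _ => (1:ℂ)) with hJdef
    have hgoal : x • (1 : Matrix (Fin (m+1)) (Fin (m+1)) ℂ) - (L + J) = M - J := by
      rw [hMdef]; abel
    rw [hgoal]
    have hrowM : ∀ i, ∑ j, M i j = x := by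
      intro i
      simp [hMdef, Matrix.sub_apply, Matrix.smul_apply, Matrix.one_apply,
        Finset.sum_sub_distrib, hrow i, Finset.sum_ite_eq]
    have hrowMJ : ∀ i, ∑ j, (M - J) i j = x - (m+1 : ℕ) := by
      intro i
      simp [Matrix.sub_apply, hJdef, Finset.sum_sub_distrib, hrowM i]
    set A := M.updateCol 0 (fun _ => (1:ℂ)) with hA
    set B := (M - J).updateCol 0 (fun _ => (1:ℂ)) with hB
    have hdetM : M.det = x * A.det := key M x hrowM
    have hdetMJ : (M - J).det = (x - (m+1 : ℕ)) * B.det := key (M - J) _ hrowMJ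
    -- column operation matrix
    set F : Matrix (Fin (m+1)) (Fin (m+1)) ℂ :=
      1 + Matrix.of (fun j k => if j = 0 ∧ k ≠ 0 then 1 else 0) with hF
    have hdetF : F.det = 1 := by
      rw [Matrix.det_of_upperTriangular]
      · simp [hF, Matrix.one_apply]
      · intro j k hlt
        simp only [hF, Matrix.add_apply, Matrix.one_apply, Matrix.of_apply]
        rw [if_neg, if_neg]
        · ring
        · rintro ⟨hj, -⟩
          subst hj
          exact absurd hlt (by simp [Fin.lt_iff_val_lt_val])
        · exact fun h => absurd hlt (by simp [h])
    have hAB : A = B * F := by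
      ext i k
      simp only [Matrix.mul_apply, hF, Matrix.add_apply, Matrix.one_apply, Matrix.of_apply,
        mul_add]
      rw [Finset.sum_add_distrib]
      by_cases hk : k = 0
      · subst hk
        simp [hA, hB, Matrix.updateCol_apply, Finset.sum_ite_eq']
      · have hs1 : (∑ j, B i j * if j = k then 1 else 0) = B i k := by
          simp [Finset.sum_ite_eq']
        have hs2 : (∑ j, B i j * if j = 0 ∧ k ≠ 0 then (1:ℂ) else 0) = B i 0 := by
          simp [hk, Finset.sum_ite_eq']
        rw [hs1, hs2]
        simp [hA, hB, Matrix.updateCol_apply, hk, Matrix.sub_apply, hJdef]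
    have hdAB : A.det = B.det := by
      rw [hAB, Matrix.det_mul, hdetF, mul_one]
    rw [hdetM, hdetMJ, hdAB]
    push_cast
    ring
end

section
/- For integers n ≥ 3 and 1 ≤ m ≤ n(n-2), setting ν = ⌊m/n⌋ and κ = ⌊m/(n-1)⌋, one has ⌊(m - ν - 1)/(n - 2)⌋ = κ. -/
/-- For integers `n ≥ 3` and `1 ≤ m ≤ n(n-2)`, with `ν = ⌊m/n⌋` and
`κ = ⌊m/(n-1)⌋`, one has `⌊(m - ν - 1)/(n-2)⌋ = κ`. -/
theorem stmt13 (n m : ℕ) (hn : 3 ≤ n) (hm1 : 1 ≤ m) (hm2 : m ≤ n * (n - 2)) :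
    (m - m / n - 1) / (n - 2) = m / (n - 1) := by
  obtain ⟨k, rfl⟩ : ∃ k, n = k + 3 := ⟨n - 3, by omega⟩
  have h1 : k + 3 - 2 = k + 1 := by omega
  have h2 : k + 3 - 1 = k + 2 := by omega
  rw [h1] at hm2 ⊢
  rw [h2]
  obtain ⟨q, hq⟩ : ∃ q, m / (k + 2) = q := ⟨_, rfl⟩
  obtain ⟨r, hr⟩ : ∃ r, m % (k + 2) = r := ⟨_, rfl⟩
  have hqr : m = (k + 2) * q + r := by
    rw [← hq, ← hr]; exact (Nat.div_add_mod m (k + 2)).symm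
  have hrlt : r < k + 2 := by rw [← hr]; exact Nat.mod_lt _ (by omega)
  rw [hq]
  have hqle : q ≤ k + 1 := by
    have h3 : (k + 3) * (k + 1) + 1 = (k + 2) * (k + 2) := by ring
    have hlt : m < (k + 2) * (k + 2) := by omega
    have := (Nat.div_lt_iff_lt_mul (show 0 < k + 2 by omega)).mpr hlt
    omega
  have e1 : (k + 3) * q = (k + 2) * q + q := by ring
  have e2 : (k + 1) * q + q = (k + 2) * q := by ring
  rcases le_or_gt q r with hle | hlt
  · -- ν = q
    have hnu : m / (k + 3) = q := by
      have hm' : m = (k + 3) * q + (r - q) := by omega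
      rw [hm', Nat.mul_add_div (by omega), Nat.div_eq_of_lt (by omega)]; omega
    rw [hnu]
    rcases Nat.eq_zero_or_pos q with h0 | hpos
    · subst h0
      rw [Nat.div_eq_of_lt (by omega)]
    · have hr1 : 1 ≤ r := le_trans hpos hle
      have hm' : m - q - 1 = (k + 1) * q + (r - 1) := by omega
      rw [hm', Nat.mul_add_div (by omega), Nat.div_eq_of_lt (by omega)]; omega
  · -- r < q, so q ≥ 1; write q = p + 1
    obtain ⟨p, rfl⟩ : ∃ p, q = p + 1 := ⟨q - 1, by omega⟩
    have f1 : (k + 2) * (p + 1) = (k + 2) * p + (k + 2) := by ring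
    have f2 : (k + 3) * p = (k + 2) * p + p := by ring
    have f3 : (k + 1) * (p + 1) + p = (k + 2) * p + (k + 1) := by ring
    have hnu : m / (k + 3) = p := by
      have hm' : m = (k + 3) * p + (k + 2 + r - p) := by omega
      rw [hm', Nat.mul_add_div (by omega), Nat.div_eq_of_lt (by omega)]; omega
    rw [hnu]
    have hm' : m - p - 1 = (k + 1) * (p + 1) + r := by omega
    rw [hm', Nat.mul_add_div (by omega), Nat.div_eq_of_lt (by omega)]
end

section
/- For any simple integer-weighted directed graph with n vertices and total (net) arc weight m_w = ∑_{i,j} w_{ij}, the normalized spread of its Laplacian eigenvalues satisfies σ² ≥ (1/(n-1)²)[m_w - (n-1)κ_w][(n-1)(κ_w + 1) - m_w] where κ_w = ⌊m_w/(n-1)⌋, with equality if and only if the Laplacian spectrum is {0, κ_w with multiplicity (n-1)(κ_w+1) - m_w, κ_w + 1 with multiplicity m_w - (n-1)κ_w}. -/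
/-!
The Laplacian is an integer matrix and `λ₀ = 0`, so the other eigenvalues `λᵢ` are the roots
of the monic integer polynomial `χ_L / X` of degree `N = n - 1`; they sum to `tr L = m`.
For an integer `k`, the number `2 ^ N * (χ_L / X)(k + 1/2)` is an odd integer, so
`∏ 4 |λᵢ - (k + 1/2)|² ≥ 1`, and AM–GM gives `∑ |λᵢ - (k + 1/2)|² ≥ N / 4`. Moving the centre
from `k + 1/2` to the mean `m / N` turns this into `N σ² ≥ (m - N k)(N (k + 1) - m) / N`, with
equality iff every `|λᵢ - (k + 1/2)|` is `1/2`. On that circle `|(λ - k)(λ - k - 1)| ≤ 1/2`, so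
the integer `(χ_L / X)(k) (χ_L / X)(k + 1)` has modulus `< 1` and vanishes; dividing out that
integer root and repeating shows that every `λᵢ` is `k` or `k + 1`, and the trace then fixes
the two multiplicities.
-/

open Polynomial

/-- Weighted in-degree Laplacian `L_w = D_w - A_w` of an integer-weighted
simple directed graph: `w i j` is the weight of arc `(j, i)` (zero if no arc),
`D_w` is diagonal with entries `∑ j, w i j`, and `(A_w) i j = w i j`. -/
noncomputable def lapW (n : ℕ) (w : Fin n → Fin n → ℤ) : Matrix (Fin n) (Fin n) ℂ :=
  Matrix.diagonal (fun i => ∑ j, ((w i j : ℤ) : ℂ)) -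
    Matrix.of (fun i j => ((w i j : ℤ) : ℂ))

open Finset

section AMGM

variable {ι : Type*} {s : Finset ι} {x : ι → ℝ}

theorem Finset.pos_of_one_le_prod (hx : ∀ i ∈ s, 0 ≤ x i) (h : 1 ≤ ∏ i ∈ s, x i) :
    ∀ i ∈ s, 0 < x i := fun i hi =>
  (hx i hi).lt_of_ne' fun h0 => by rw [prod_eq_zero hi h0] at h; linarith

theorem Real.sub_one_sub_log_nonneg {y : ℝ} (hy : 0 < y) : 0 ≤ y - 1 - Real.log y := by
  linarith [Real.log_le_sub_one_of_pos hy]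

theorem Real.sum_sub_one_sub_log_le (hx : ∀ i ∈ s, 0 < x i) (h : 1 ≤ ∏ i ∈ s, x i) :
    ∑ i ∈ s, (x i - 1 - Real.log (x i)) ≤ ∑ i ∈ s, x i - #s := by
  have hlog : 0 ≤ ∑ i ∈ s, Real.log (x i) := by
    rw [← Real.log_prod fun i hi => (hx i hi).ne']
    exact Real.log_nonneg h
  simp only [sum_sub_distrib, sum_const, nsmul_one]
  linarith

theorem Real.card_le_sum_of_one_le_prod (hx : ∀ i ∈ s, 0 < x i) (h : 1 ≤ ∏ i ∈ s, x i) :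
    (#s : ℝ) ≤ ∑ i ∈ s, x i := by
  have := sum_nonneg fun i hi => Real.sub_one_sub_log_nonneg (hx i hi)
  linarith [Real.sum_sub_one_sub_log_le hx h]

theorem Real.eq_one_of_one_le_prod_of_sum_eq_card (hx : ∀ i ∈ s, 0 < x i)
    (h : 1 ≤ ∏ i ∈ s, x i) (hsum : ∑ i ∈ s, x i = #s) : ∀ i ∈ s, x i = 1 := by
  have hnonneg := fun i hi => Real.sub_one_sub_log_nonneg (y := x i) (hx i hi)
  have hzero : ∑ i ∈ s, (x i - 1 - Real.log (x i)) = 0 :=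
    le_antisymm (by linarith [Real.sum_sub_one_sub_log_le hx h]) (sum_nonneg hnonneg)
  intro i hi
  have hi0 := (sum_eq_zero_iff_of_nonneg hnonneg).mp hzero i hi
  by_contra hne
  linarith [Real.log_lt_sub_one_of_pos (hx i hi) hne]

end AMGM

theorem Multiset.exists_eq_replicate_add_replicate {α : Type*} [DecidableEq α] {s : Multiset α}
    {x y : α} (h : ∀ w ∈ s, w = x ∨ w = y) : ∃ a b, s = replicate a x + replicate b y := by
  have hy : ∀ w ∈ s.filter (fun w => ¬w = x), w = y := fun w hw =>
    (h w (mem_filter.mp hw).1).resolve_left (mem_filter.mp hw).2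
  refine ⟨count x s, card (s.filter fun w => ¬w = x), ?_⟩
  conv_lhs => rw [← filter_add_not (· = x) s, filter_eq', eq_replicate_card.mpr hy]

theorem Multiset.forall_eq_or_eq_add_one_iff {R : Type*} [Ring R] [CharZero R]
    {s : Multiset R} {k m : ℤ} (hs : s.sum = m) :
    (∀ w ∈ s, w = k ∨ w = k + 1) ↔
      s = replicate (((card s : ℤ) * (k + 1) - m).toNat) (k : R) +
        replicate ((m - card s * k).toNat) ((k : R) + 1) := by
  classical
  refine ⟨fun h => ?_, fun h w hw => ?_⟩
  · obtain ⟨a, b, rfl⟩ := exists_eq_replicate_add_replicate h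
    have hm : (a : ℤ) * k + b * (k + 1) = m := by
      apply Int.cast_injective (α := R)
      rw [← hs]
      simp [mul_add]
    have hcard : card (replicate a (k : R) + replicate b ((k : R) + 1)) = a + b := by simp
    have ha : ((a + b : ℕ) : ℤ) * (k + 1) - m = a := by rw [← hm]; push_cast; ring
    have hb : m - ((a + b : ℕ) : ℤ) * k = b := by rw [← hm]; push_cast; ring
    rw [hcard, ha, hb, Int.toNat_natCast, Int.toNat_natCast]
  · rw [h, mem_add, mem_replicate, mem_replicate] at hw
    exact hw.imp And.right And.right

theorem Polynomial.roots_finset_prod_X_sub_C {ι R : Type*} [CommRing R] [IsDomain R]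
    (s : Finset ι) (f : ι → R) : (∏ i ∈ s, (X - C (f i))).roots = s.val.map f := by
  rw [prod_eq_multiset_prod, ← roots_multiset_prod_X_sub_C (s.val.map f), Multiset.map_map]
  rfl

theorem one_le_two_pow_natDegree_mul_norm_aeval_add_half {p : ℤ[X]} (hp : p.Monic) (k : ℤ) :
    1 ≤ 2 ^ p.natDegree * ‖aeval ((k : ℂ) + 1 / 2) p‖ := by
  set N := (p.scaleRoots 2).eval (2 * k + 1)
  have hN : (N : ℂ) = 2 ^ p.natDegree * aeval ((k : ℂ) + 1 / 2) p := by
    have h := scaleRoots_eval₂_mul (p := p) (algebraMap ℤ ℂ) ((k : ℂ) + 1 / 2) 2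
    rw [map_ofNat] at h
    rw [aeval_def, ← h, ← eq_intCast (algebraMap ℤ ℂ), ← eval₂_at_apply]
    congr 1
    rw [map_add, map_mul, map_ofNat, map_one, eq_intCast]
    ring
  -- Modulo 2, `scaleRoots p 2` is `X ^ natDegree p` because `p` is monic.
  have hN2 : (N : ZMod 2) = 1 := by
    have h := eval_intCast_map (Int.castRingHom (ZMod 2)) (p.scaleRoots 2) (2 * k + 1)
    rw [map_scaleRoots _ _ _ (by simp [hp.leadingCoeff])] at h
    simp only [eq_intCast, Int.cast_ofNat, Int.cast_id] at h
    rw [← h]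
    simp [show (2 : ZMod 2) = 0 from rfl, (hp.map _).leadingCoeff]
  have hN0 : N ≠ 0 := fun h => by simp [h] at hN2
  calc (1 : ℝ) ≤ |(N : ℝ)| := by exact_mod_cast Int.one_le_abs hN0
    _ = 2 ^ p.natDegree * ‖aeval ((k : ℂ) + 1 / 2) p‖ := by
      rw [← Complex.norm_intCast, hN, norm_mul, norm_pow, Complex.norm_two]

theorem isRoot_or_isRoot_add_one_of_aroots_norm_le {p : ℤ[X]} (hp : p.Monic) {k : ℤ}
    (hne : p.aroots ℂ ≠ 0) (h : ∀ z ∈ p.aroots ℂ, ‖z - (k + 1 / 2)‖ ≤ 1 / 2) :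
    p.IsRoot k ∨ p.IsRoot (k + 1) := by
  simp only [IsRoot.def, ← mul_eq_zero]
  by_contra hk
  have hsplit := IsAlgClosed.splits (p.map (algebraMap ℤ ℂ))
  have hc (c : ℤ) : ((p.eval c : ℤ) : ℂ) = ((p.aroots ℂ).map fun z => (c : ℂ) - z).prod := by
    rw [aroots_def, ← hsplit.eval_eq_prod_roots_of_monic (hp.map _), eval_intCast_map,
      eq_intCast, Int.cast_id]
  have heval : ((p.eval k * p.eval (k + 1) : ℤ) : ℂ) =
      ((p.aroots ℂ).map fun z => ((k : ℂ) - z) * (k + 1 - z)).prod := by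
    rw [Multiset.prod_map_mul, Int.cast_mul, hc, hc]
    push_cast
    rfl
  have hfactor : ∀ z ∈ p.aroots ℂ, ‖((k : ℂ) - z) * (k + 1 - z)‖ ≤ 1 / 2 := fun z hz =>
    calc ‖((k : ℂ) - z) * (k + 1 - z)‖ = ‖(z - (k + 1 / 2)) ^ 2 - (1 / 2) ^ 2‖ := by ring_nf
      _ ≤ ‖z - (k + 1 / 2)‖ ^ 2 + ‖(1 / 2 : ℂ)‖ ^ 2 :=
        (norm_sub_le _ _).trans_eq (by rw [norm_pow, norm_pow])
      _ ≤ (1 / 2) ^ 2 + (1 / 2) ^ 2 := by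
        gcongr
        · exact h z hz
        · norm_num
      _ = 1 / 2 := by norm_num
  have hcard : Multiset.card (p.aroots ℂ) ≠ 0 := by simpa using hne
  have : (1 : ℝ) ≤ (1 / 2) ^ Multiset.card (p.aroots ℂ) :=
    calc (1 : ℝ) ≤ |((p.eval k * p.eval (k + 1) : ℤ) : ℝ)| := by
          exact_mod_cast Int.one_le_abs hk
      _ = ((p.aroots ℂ).map fun z => ‖((k : ℂ) - z) * (k + 1 - z)‖).prod := by
        rw [← Complex.norm_intCast, heval]
        exact (map_multiset_prod (normHom (α := ℂ)) _).trans (by rw [Multiset.map_map]; rfl)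
      _ ≤ ((p.aroots ℂ).map fun _ => (1 / 2 : ℝ)).prod :=
        Multiset.prod_map_le_prod_map₀ _ _ (fun _ _ => norm_nonneg _) hfactor
      _ = (1 / 2) ^ Multiset.card (p.aroots ℂ) := by simp
  exact absurd this (not_le.mpr (pow_lt_one₀ (by norm_num) (by norm_num) hcard))

theorem eq_or_eq_add_one_of_aroots_norm_le {k : ℤ} {p : ℤ[X]} (hp : p.Monic)
    (h : ∀ z ∈ p.aroots ℂ, ‖z - (k + 1 / 2)‖ ≤ 1 / 2) :
    ∀ z ∈ p.aroots ℂ, z = k ∨ z = k + 1 := by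
  induction hd : p.natDegree generalizing p with
  | zero =>
    intro z hz
    have hcard := card_roots' (p.map (algebraMap ℤ ℂ))
    rw [hp.natDegree_map, hd, Nat.le_zero, Multiset.card_eq_zero] at hcard
    simp [hcard] at hz
  | succ d ih =>
    intro z hz
    obtain ⟨c, hc, hroot⟩ : ∃ c : ℤ, ((c : ℂ) = k ∨ (c : ℂ) = k + 1) ∧ p.IsRoot c := by
      rcases isRoot_or_isRoot_add_one_of_aroots_norm_le hp (by rintro h0; simp [h0] at hz) h
        with hk | hk
      · exact ⟨k, Or.inl rfl, hk⟩
      · exact ⟨k + 1, Or.inr (by push_cast; rfl), hk⟩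
    have hfac : (X - C c) * (p /ₘ (X - C c)) = p := mul_divByMonic_eq_iff_isRoot.mpr hroot
    have hq : (p /ₘ (X - C c)).Monic := (monic_X_sub_C c).of_mul_monic_left (by rwa [hfac])
    have hqd : (p /ₘ (X - C c)).natDegree = d := by
      rw [natDegree_divByMonic _ (monic_X_sub_C c), hd, natDegree_X_sub_C, Nat.add_sub_cancel]
    have hroots : p.aroots ℂ = (c : ℂ) ::ₘ (p /ₘ (X - C c)).aroots ℂ := by
      conv_lhs => rw [← hfac]
      rw [aroots_mul (by rw [hfac]; exact hp.ne_zero), aroots_X_sub_C, Multiset.singleton_add,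
        eq_intCast]
    rw [hroots] at hz h
    rcases Multiset.mem_cons.mp hz with rfl | hz
    · exact hc
    · exact ih hq (fun w hw => h w (Multiset.mem_cons_of_mem hw)) hqd z hz

section RootsOfIntegerPolynomial

variable {ι : Type*} {T : Finset ι} {z : ι → ℂ} {q : ℤ[X]}

theorem monic_of_map_eq_prod (hq : q.map (Int.castRingHom ℂ) = ∏ i ∈ T, (X - C (z i))) :
    q.Monic :=
  Int.cast_injective.monic_map_iff.mpr (hq ▸ monic_prod_of_monic _ _ fun _ _ => monic_X_sub_C _)

theorem natDegree_eq_card_of_map_eq_prod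
    (hq : q.map (Int.castRingHom ℂ) = ∏ i ∈ T, (X - C (z i))) : q.natDegree = #T := by
  rw [← (monic_of_map_eq_prod hq).natDegree_map (Int.castRingHom ℂ), hq,
    natDegree_prod_of_monic _ _ fun _ _ => monic_X_sub_C _]
  simp

theorem aroots_eq_of_map_eq_prod (hq : q.map (Int.castRingHom ℂ) = ∏ i ∈ T, (X - C (z i))) :
    q.aroots ℂ = T.val.map z := by
  rw [aroots_def, algebraMap_int_eq, hq, roots_finset_prod_X_sub_C]

theorem aeval_eq_prod_of_map_eq_prod (hq : q.map (Int.castRingHom ℂ) = ∏ i ∈ T, (X - C (z i)))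
    (c : ℂ) : aeval c q = ∏ i ∈ T, (c - z i) := by
  rw [aeval_def, algebraMap_int_eq, ← eval_map, hq, eval_prod]
  simp

theorem exists_map_eq_prod_erase [DecidableEq ι] {p : ℤ[X]}
    (hp : p.map (Int.castRingHom ℂ) = ∏ i ∈ T, (X - C (z i))) {i₀ : ι} (hi₀ : i₀ ∈ T)
    (hz : z i₀ = 0) : ∃ q : ℤ[X], q.map (Int.castRingHom ℂ) = ∏ i ∈ T.erase i₀, (X - C (z i)) := by
  have hX : p.map (Int.castRingHom ℂ) = X * ∏ i ∈ T.erase i₀, (X - C (z i)) := by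
    rw [hp, ← mul_prod_erase T _ hi₀, hz, C_0, sub_zero]
  obtain ⟨q, rfl⟩ : X ∣ p := (map_dvd_map _ (Int.castRingHom ℂ).injective_int monic_X).mp
    (by rw [Polynomial.map_X, hX]; exact dvd_mul_right _ _)
  refine ⟨q, mul_left_cancel₀ X_ne_zero ?_⟩
  rw [← hX, Polynomial.map_mul, Polynomial.map_X]

theorem one_le_prod_four_mul_norm_sub_sq
    (hq : q.map (Int.castRingHom ℂ) = ∏ i ∈ T, (X - C (z i))) (k : ℤ) :
    1 ≤ ∏ i ∈ T, 4 * ‖z i - (k + 1 / 2)‖ ^ 2 := by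
  have h := one_le_two_pow_natDegree_mul_norm_aeval_add_half (monic_of_map_eq_prod hq) k
  rw [natDegree_eq_card_of_map_eq_prod hq, aeval_eq_prod_of_map_eq_prod hq, norm_prod] at h
  calc (1 : ℝ) ≤ (2 ^ #T * ∏ i ∈ T, ‖(k + 1 / 2 : ℂ) - z i‖) ^ 2 := one_le_pow₀ h
    _ = ∏ i ∈ T, 4 * ‖z i - (k + 1 / 2)‖ ^ 2 := by
      rw [mul_pow, ← pow_mul, mul_comm #T 2, pow_mul, ← prod_pow, prod_mul_distrib, prod_const]
      simp_rw [norm_sub_rev]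
      norm_num

theorem card_div_four_le_sum_norm_sub_sq
    (hq : q.map (Int.castRingHom ℂ) = ∏ i ∈ T, (X - C (z i))) (k : ℤ) :
    (#T : ℝ) / 4 ≤ ∑ i ∈ T, ‖z i - (k + 1 / 2)‖ ^ 2 := by
  have hprod := one_le_prod_four_mul_norm_sub_sq hq k
  have h := Real.card_le_sum_of_one_le_prod
    (pos_of_one_le_prod (fun _ _ => by positivity) hprod) hprod
  rw [← mul_sum] at h
  linarith

theorem eq_or_eq_add_one_of_sum_norm_sub_sq_eq
    (hq : q.map (Int.castRingHom ℂ) = ∏ i ∈ T, (X - C (z i))) (k : ℤ)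
    (h : ∑ i ∈ T, ‖z i - (k + 1 / 2)‖ ^ 2 = #T / 4) : ∀ i ∈ T, z i = k ∨ z i = k + 1 := by
  have hprod := one_le_prod_four_mul_norm_sub_sq hq k
  have hquarter := Real.eq_one_of_one_le_prod_of_sum_eq_card
    (pos_of_one_le_prod (fun _ _ => by positivity) hprod) hprod (by rw [← mul_sum, h]; ring)
  have hdisc : ∀ w ∈ q.aroots ℂ, ‖w - (k + 1 / 2)‖ ≤ 1 / 2 := by
    rw [aroots_eq_of_map_eq_prod hq]
    rintro _ hw
    obtain ⟨i, hi, rfl⟩ := Multiset.mem_map.mp hw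
    nlinarith [hquarter i hi, norm_nonneg (z i - (k + 1 / 2))]
  intro i hi
  refine eq_or_eq_add_one_of_aroots_norm_le (monic_of_map_eq_prod hq) hdisc _ ?_
  rw [aroots_eq_of_map_eq_prod hq]
  exact Multiset.mem_map_of_mem z hi

theorem norm_sub_ofReal_sq (w : ℂ) (r : ℝ) : ‖w - r‖ ^ 2 = (w.re - r) ^ 2 + w.im ^ 2 := by
  rw [Complex.sq_norm, Complex.normSq_apply]
  simp only [Complex.sub_re, Complex.sub_im, Complex.ofReal_re, Complex.ofReal_im, sub_zero]
  ring

theorem sum_norm_sub_ofReal_sq_eq {μ : ℝ} (hμ : ∑ i ∈ T, (z i).re = #T * μ) (c : ℝ) :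
    ∑ i ∈ T, ‖z i - μ‖ ^ 2 = ∑ i ∈ T, ‖z i - c‖ ^ 2 - #T * (c - μ) ^ 2 := by
  have key : ∀ i ∈ T, ‖z i - μ‖ ^ 2 =
      ‖z i - c‖ ^ 2 + (2 * (c - μ) * (z i).re + (μ ^ 2 - c ^ 2)) :=
    fun i _ => by rw [norm_sub_ofReal_sq, norm_sub_ofReal_sq]; ring
  rw [sum_congr rfl key, sum_add_distrib, sum_add_distrib, ← mul_sum, hμ, sum_const, nsmul_eq_mul]
  ring

theorem sum_norm_sub_mean_sq_div_card_eq {m : ℤ} (hm : ∑ i ∈ T, z i = m) (hT : T.Nonempty)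
    (k : ℤ) :
    (∑ i ∈ T, ‖z i - ((m / #T : ℝ) : ℂ)‖ ^ 2) / #T =
      (∑ i ∈ T, ‖z i - (k + 1 / 2)‖ ^ 2 - #T / 4) / #T +
        ((m : ℝ) - #T * k) * (#T * (k + 1) - m) / (#T : ℝ) ^ 2 := by
  have hN : (#T : ℝ) ≠ 0 := by exact_mod_cast hT.card_pos.ne'
  have hre : ∑ i ∈ T, (z i).re = #T * (m / #T : ℝ) := by
    rw [← Complex.re_sum, hm, Complex.intCast_re, mul_div_cancel₀ _ hN]
  have hc : (((k : ℝ) + 1 / 2 : ℝ) : ℂ) = (k : ℂ) + 1 / 2 := by push_cast; ring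
  rw [sum_norm_sub_ofReal_sq_eq hre ((k : ℝ) + 1 / 2), hc]
  generalize ∑ i ∈ T, ‖z i - ((k : ℂ) + 1 / 2)‖ ^ 2 = S
  field_simp
  ring

theorem le_sum_norm_sub_mean_sq_div_card {m : ℤ}
    (hq : q.map (Int.castRingHom ℂ) = ∏ i ∈ T, (X - C (z i))) (hm : ∑ i ∈ T, z i = m)
    (hT : T.Nonempty) (k : ℤ) :
    ((m : ℝ) - #T * k) * (#T * (k + 1) - m) / (#T : ℝ) ^ 2 ≤
      (∑ i ∈ T, ‖z i - ((m / #T : ℝ) : ℂ)‖ ^ 2) / #T := by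
  rw [sum_norm_sub_mean_sq_div_card_eq hm hT k]
  have := card_div_four_le_sum_norm_sub_sq hq k
  exact le_add_of_nonneg_left (div_nonneg (by linarith) (by positivity))

theorem sum_norm_sub_mean_sq_div_card_eq_iff {m : ℤ}
    (hq : q.map (Int.castRingHom ℂ) = ∏ i ∈ T, (X - C (z i))) (hm : ∑ i ∈ T, z i = m)
    (hT : T.Nonempty) (k : ℤ) :
    (∑ i ∈ T, ‖z i - ((m / #T : ℝ) : ℂ)‖ ^ 2) / #T =
        ((m : ℝ) - #T * k) * (#T * (k + 1) - m) / (#T : ℝ) ^ 2 ↔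
      T.val.map z = Multiset.replicate (((#T : ℤ) * (k + 1) - m).toNat) (k : ℂ) +
        Multiset.replicate ((m - #T * k).toNat) ((k : ℂ) + 1) := by
  have hcount := Multiset.forall_eq_or_eq_add_one_iff (k := k) (show (T.val.map z).sum = m from hm)
  rw [Multiset.card_map, ← card_def] at hcount
  rw [sum_norm_sub_mean_sq_div_card_eq hm hT k, add_eq_right, div_eq_zero_iff,
    or_iff_left (by exact_mod_cast hT.card_pos.ne'), sub_eq_zero, ← hcount]
  refine ⟨fun h w hw => ?_, fun h => ?_⟩
  · obtain ⟨i, hi, rfl⟩ := Multiset.mem_map.mp hw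
    exact eq_or_eq_add_one_of_sum_norm_sub_sq_eq hq k h i hi
  · have hquarter : ∀ i ∈ T, ‖z i - (k + 1 / 2)‖ ^ 2 = 1 / 4 := fun i hi => by
      rcases h (z i) (Multiset.mem_map_of_mem z hi) with hz | hz <;>
        rw [hz] <;> ring_nf <;> norm_num
    rw [sum_congr rfl hquarter, sum_const, nsmul_eq_mul]
    ring

end RootsOfIntegerPolynomial

theorem lapW_eq_map (n : ℕ) (w : Fin n → Fin n → ℤ) :
    lapW n w = (Matrix.diagonal (fun i => ∑ j, w i j) - Matrix.of w).map (Int.castRingHom ℂ) := by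
  ext i j
  by_cases h : i = j <;> simp [lapW, h]

theorem trace_lapW {n : ℕ} {w : Fin n → Fin n → ℤ} (hw : ∀ i, w i i = 0) :
    (lapW n w).trace = ((∑ i, ∑ j, w i j : ℤ) : ℂ) := by
  simp [Matrix.trace, lapW, hw]

/-- For any simple integer-weighted directed graph with `n ≥ 2` vertices and
net number of arcs `m_w = ∑ w i j`, the normalized Laplacian eigenvalue spread
satisfies `σ² ≥ (1/(n-1)²)[m_w - (n-1)κ_w][(n-1)(κ_w+1) - m_w]` with
`κ_w = ⌊m_w/(n-1)⌋`, with equality iff the Laplacian spectrum is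
`{0, κ_w with multiplicity (n-1)(κ_w+1) - m_w, κ_w + 1 with multiplicity
m_w - (n-1)κ_w}`. -/
theorem stmt17 (n : ℕ) (hn : 2 ≤ n) (w : Fin n → Fin n → ℤ)
    (hsimple : ∀ i, w i i = 0) (mw : ℤ) (hmw : ∑ i, ∑ j, w i j = mw)
    (lam : Fin n → ℂ) (hfac : (lapW n w).charpoly = ∏ i, (X - C (lam i)))
    (h0 : lam ⟨0, by omega⟩ = 0)
    (κ : ℤ) :
    (((mw : ℝ) - ((n : ℝ) - 1) * (κ : ℝ)) *
        (((n : ℝ) - 1) * ((κ : ℝ) + 1) - (mw : ℝ)) / ((n : ℝ) - 1) ^ 2 ≤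
      (∑ i ∈ Finset.univ.erase (⟨0, by omega⟩ : Fin n),
        ‖lam i - (((mw : ℝ) / ((n : ℝ) - 1) : ℝ) : ℂ)‖ ^ 2) / ((n : ℝ) - 1)) ∧
    ((∑ i ∈ Finset.univ.erase (⟨0, by omega⟩ : Fin n),
        ‖lam i - (((mw : ℝ) / ((n : ℝ) - 1) : ℝ) : ℂ)‖ ^ 2) / ((n : ℝ) - 1) =
      ((mw : ℝ) - ((n : ℝ) - 1) * (κ : ℝ)) *
        (((n : ℝ) - 1) * ((κ : ℝ) + 1) - (mw : ℝ)) / ((n : ℝ) - 1) ^ 2 ↔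
      Multiset.map lam Finset.univ.val =
        0 ::ₘ (Multiset.replicate ((((n : ℤ) - 1) * (κ + 1) - mw).toNat) ((κ : ℤ) : ℂ) +
          Multiset.replicate ((mw - ((n : ℤ) - 1) * κ).toNat) (((κ : ℤ) : ℂ) + 1))) := by
  set i₀ : Fin n := ⟨0, by omega⟩
  have hTcard : #(univ.erase i₀) = n - 1 := by simp
  have hT : (univ.erase i₀).Nonempty := by rw [← card_pos, hTcard]; omega
  have hTR : (#(univ.erase i₀) : ℝ) = n - 1 := by rw [hTcard, Nat.cast_sub (by omega), Nat.cast_one]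
  have hTZ : (#(univ.erase i₀) : ℤ) = n - 1 := by rw [hTcard]; omega
  have hχ : (Matrix.diagonal (fun i => ∑ j, w i j) - Matrix.of w).charpoly.map
      (Int.castRingHom ℂ) = ∏ i, (X - C (lam i)) := by
    rw [← Matrix.charpoly_map, ← lapW_eq_map, hfac]
  obtain ⟨q, hq⟩ := exists_map_eq_prod_erase hχ (mem_univ i₀) h0
  have hsum : ∑ i ∈ univ.erase i₀, lam i = mw := by
    rw [sum_erase _ h0, ← hmw, ← trace_lapW hsimple, Matrix.trace_eq_sum_roots_charpoly, hfac,
      roots_finset_prod_X_sub_C, sum_eq_multiset_sum]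
  have huniv : univ.val.map lam = 0 ::ₘ (univ.erase i₀).val.map lam := by
    rw [← h0, ← Multiset.map_cons, erase_val, Multiset.cons_erase (mem_univ_val i₀)]
  have hle := le_sum_norm_sub_mean_sq_div_card hq hsum hT κ
  have heq := sum_norm_sub_mean_sq_div_card_eq_iff hq hsum hT κ
  rw [hTR] at hle
  rw [hTR, hTZ] at heq
  rw [huniv, Multiset.cons_inj_right]
  exact ⟨hle, heq⟩
end
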